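/- arXiv:1608.00555 — 3 statements merged into one kernel-verified Lean document; each statement's English description precedes it below -/
import Mathlib

section
/- Let φ_v(N) = Σ_{d|N} μ(d)/d^{1+v}. For complex numbers s, v with Re s > 1, the Dirichlet series Σ_{m=1}^∞ μ(m)(m,N)^s / m^{1+v+s} equals φ_v(N) / (ζ(1+s+v) · φ_{s+v}(N)), where (m,N) denotes gcd(m,N). -/
open Finset Complex ArithmeticFunction

/-- `φ_v(N) = Σ_{d|N} μ(d)/d^{1+v}`. -/
noncomputable def phiGen (v : ℂ) (N : ℕ) : ℂ :=
  ∑ d ∈ N.divisors, (moebius d : ℂ) / (d : ℂ) ^ ((1 : ℂ) + v)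

/-!
Write `w = 1 + v + s`. The coefficient `n ↦ μ(n) (n,N)^s` is multiplicative and vanishes off the
squarefree numbers, so the series is the Euler product `∏_p (1 + μ(p) (p,N)^s p^{-w})`, whose
factor is `1 - p^{-w}` for `p ∤ N` and `1 - p^{-(1+v)}` for `p ∣ N`. Multiplying by the Euler
product `ζ(w) = ∏_p (1 - p^{-w})⁻¹` leaves the finite product
`∏_{p ∣ N} (1 - p^{-(1+v)}) / (1 - p^{-w})`, which is `φ_v(N) / φ_{s+v}(N)` because
`Σ_{d ∣ n} μ(d) f(d) = ∏_{p ∣ n} (1 - f(p))` for every multiplicative `f`.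
-/

theorem Nat.squarefree_prod_primeFactors (n : ℕ) : Squarefree (∏ p ∈ n.primeFactors, p) :=
  Finset.squarefree_prod_of_pairwise_isCoprime
    (fun _ hp _ hq hpq => Nat.coprime_iff_isRelPrime.mp <|
      (Nat.coprime_primes (Nat.prime_of_mem_primeFactors hp)
        (Nat.prime_of_mem_primeFactors hq)).mpr hpq)
    fun _ hp => (Nat.prime_of_mem_primeFactors hp).squarefree

theorem sum_divisors_moebius_mul_eq_sum_divisors_radical {R : Type*} [Ring R] (g : ℕ → R)
    {n : ℕ} (hn : n ≠ 0) :
    ∑ d ∈ n.divisors, (moebius d : R) * g d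
      = ∑ d ∈ (∏ p ∈ n.primeFactors, p).divisors, (moebius d : R) * g d := by
  have hr := Nat.squarefree_prod_primeFactors n
  refine (sum_subset (Nat.divisors_subset_of_dvd hn (Nat.prod_primeFactors_dvd n)) ?_).symm
  intro d hdn hdr
  suffices ¬ Squarefree d by rw [moebius_eq_zero_of_not_squarefree this, Int.cast_zero, zero_mul]
  intro hd
  refine hdr (Nat.mem_divisors.mpr ⟨?_, hr.ne_zero⟩)
  rw [← Nat.prod_primeFactors_of_squarefree hd, Nat.prod_primeFactors_dvd_iff hr.ne_zero,
    Nat.primeFactors_prod_primeFactors]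
  exact Nat.primeFactors_mono (Nat.dvd_of_mem_divisors hdn) hn

theorem sum_divisors_moebius_mul_eq_prod_one_sub {R : Type*} [CommRing R] {f : ℕ → R}
    (h1 : f 1 = 1) (hmul : ∀ {m n : ℕ}, m.Coprime n → f (m * n) = f m * f n) {n : ℕ}
    (hn : n ≠ 0) :
    ∑ d ∈ n.divisors, (moebius d : R) * f d = ∏ p ∈ n.primeFactors, (1 - f p) := by
  have hF : (toArithmeticFunction f).IsMultiplicative := by
    refine IsMultiplicative.iff_ne_zero.mpr ⟨by simp [toArithmeticFunction, h1], ?_⟩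
    intro m k hm hk hmk
    simp [toArithmeticFunction, hm, hk, hmul hmk]
  have hF_apply {d : ℕ} (hd : d ≠ 0) : toArithmeticFunction f d = f d := if_neg hd
  set r := ∏ p ∈ n.primeFactors, p
  calc ∑ d ∈ n.divisors, (moebius d : R) * f d
      = ∑ d ∈ r.divisors, (moebius d : R) * toArithmeticFunction f d := by
        rw [sum_divisors_moebius_mul_eq_sum_divisors_radical f hn]
        exact sum_congr rfl fun d hd => by rw [hF_apply (Nat.pos_of_mem_divisors hd).ne']
    _ = ∏ p ∈ r.primeFactors, (1 - toArithmeticFunction f p) := by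
        rw [hF.prodPrimeFactors_one_sub_of_squarefree _ (Nat.squarefree_prod_primeFactors n)]
    _ = ∏ p ∈ n.primeFactors, (1 - f p) := by
        rw [Nat.primeFactors_prod_primeFactors]
        exact prod_congr rfl fun p hp => by rw [hF_apply (Nat.prime_of_mem_primeFactors hp).ne_zero]

theorem phiGen_eq_prod_one_sub (c : ℂ) {N : ℕ} (hN : N ≠ 0) :
    phiGen c N = ∏ p ∈ N.primeFactors, (1 - (p : ℂ) ^ (-(1 + c))) := by
  rw [phiGen, ← sum_divisors_moebius_mul_eq_prod_one_sub
    (f := fun n : ℕ => (n : ℂ) ^ (-(1 + c))) (by simp)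
    (fun _ => by simp only [Nat.cast_mul, natCast_mul_natCast_cpow]) hN]
  exact sum_congr rfl fun d _ => by rw [cpow_neg, div_eq_mul_inv]

theorem Nat.Primes.hasProd_ite_dvd {M : Type*} [CommMonoid M] [TopologicalSpace M] (g : ℕ → M)
    {N : ℕ} (hN : N ≠ 0) :
    HasProd (fun p : Nat.Primes => if (p : ℕ) ∣ N then g p else 1)
      (∏ p ∈ N.primeFactors, g p) := by
  set S := N.primeFactors.subtype Nat.Prime
  have hS (p : Nat.Primes) (hp : p ∉ S) : ¬ (p : ℕ) ∣ N := fun hpN =>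
    hp (mem_subtype.mpr (Nat.mem_primeFactors.mpr ⟨p.prop, hpN, hN⟩))
  convert hasProd_prod_of_ne_finset_one (L := .unconditional _) fun p hp => if_neg (hS p hp)
    using 1
  refine Eq.trans ?_ (prod_subtype_eq_prod_filter (s := N.primeFactors) (p := Nat.Prime)
    fun p => if p ∣ N then g p else 1).symm
  rw [filter_true_of_mem fun p hp => Nat.prime_of_mem_primeFactors hp]
  exact prod_congr rfl fun p hp => (if_pos (Nat.dvd_of_mem_primeFactors hp)).symm

section EulerProduct

open LSeries

theorem LSeries_eq_tsum_pnat (f : ℕ → ℂ) (s : ℂ) :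
    LSeries f s = ∑' n : ℕ+, f n / (n : ℂ) ^ s := by
  rw [LSeries, ← tsum_pnat_eq_tsum_of_eq_zero (term_zero f s)]
  exact tsum_congr fun n => term_of_ne_zero n.ne_zero f s

variable {f : ℕ → ℂ}

theorem LSeries.term_mul_of_coprime (hmul : ∀ {m n : ℕ}, m.Coprime n → f (m * n) = f m * f n)
    (s : ℂ) {m n : ℕ} (hmn : m.Coprime n) :
    term f s (m * n) = term f s m * term f s n := by
  rcases eq_or_ne m 0 with rfl | hm
  · obtain rfl : n = 1 := Nat.coprime_zero_left n |>.mp hmn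
    simp
  rcases eq_or_ne n 0 with rfl | hn
  · obtain rfl : m = 1 := Nat.coprime_zero_right m |>.mp hmn
    simp
  rw [term_of_ne_zero (mul_ne_zero hm hn), term_of_ne_zero hm, term_of_ne_zero hn, hmul hmn,
    Nat.cast_mul, natCast_mul_natCast_cpow, div_mul_div_comm]

theorem LSeries_hasProd_one_add_of_squarefree (h1 : f 1 = 1)
    (hmul : ∀ {m n : ℕ}, m.Coprime n → f (m * n) = f m * f n)
    (hsq : ∀ n, ¬ Squarefree n → f n = 0) {s : ℂ} (hs : LSeriesSummable f s) :
    HasProd (fun p : Nat.Primes => 1 + f p / (p : ℂ) ^ s) (LSeries f s) := by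
  have hterm_one : term f s 1 = 1 := by simp [h1]
  rw [LSeries]
  convert EulerProduct.eulerProduct_hasProd hterm_one (term_mul_of_coprime hmul s)
    (summable_norm_iff.mpr hs) (term_zero f s) using 2 with p
  have hp := p.prop
  rw [tsum_eq_sum (s := range 2) fun e he => ?_, sum_range_succ, sum_range_one, pow_zero,
    pow_one, hterm_one, term_of_ne_zero hp.ne_zero]
  have he1 : 1 < e := by simpa using he
  have : ¬ Squarefree ((p : ℕ) ^ e) := by
    rw [Nat.squarefree_pow_iff hp.ne_one (by omega)]
    omega
  rw [term_of_ne_zero (pow_ne_zero _ hp.ne_zero), hsq _ this, zero_div]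

end EulerProduct

noncomputable def moebiusGcdCpow (N : ℕ) (s : ℂ) (n : ℕ) : ℂ :=
  moebius n * (n.gcd N : ℂ) ^ s

namespace moebiusGcdCpow

variable (N : ℕ) (s : ℂ)

theorem map_one : moebiusGcdCpow N s 1 = 1 := by
  simp [moebiusGcdCpow]

theorem map_mul_of_coprime {m n : ℕ} (hmn : m.Coprime n) :
    moebiusGcdCpow N s (m * n) = moebiusGcdCpow N s m * moebiusGcdCpow N s n := by
  rw [moebiusGcdCpow, moebiusGcdCpow, moebiusGcdCpow,
    isMultiplicative_moebius.map_mul_of_coprime hmn, Nat.gcd_comm, Nat.Coprime.gcd_mul N hmn,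
    Nat.gcd_comm N m, Nat.gcd_comm N n]
  push_cast
  rw [natCast_mul_natCast_cpow]
  ring

theorem eq_zero_of_not_squarefree {n : ℕ} (hn : ¬ Squarefree n) : moebiusGcdCpow N s n = 0 := by
  simp [moebiusGcdCpow, moebius_eq_zero_of_not_squarefree hn]

theorem norm_le_sum_divisors (hN : N ≠ 0) (n : ℕ) :
    ‖moebiusGcdCpow N s n‖ ≤ ∑ d ∈ N.divisors, ‖(d : ℂ) ^ s‖ := by
  rw [moebiusGcdCpow, norm_mul]
  refine (mul_le_of_le_one_left (norm_nonneg _) ?_).trans ?_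
  · rw [norm_intCast]
    exact_mod_cast abs_moebius_le_one
  · exact single_le_sum (f := fun d : ℕ => ‖(d : ℂ) ^ s‖) (fun _ _ => norm_nonneg _)
      (Nat.mem_divisors.mpr ⟨Nat.gcd_dvd_right n N, hN⟩)

theorem one_add_div_cpow_of_prime {p : ℕ} (hp : p.Prime) (v : ℂ) :
    1 + moebiusGcdCpow N s p / (p : ℂ) ^ (1 + v + s)
      = if p ∣ N then 1 - (p : ℂ) ^ (-(1 + v)) else 1 - (p : ℂ) ^ (-(1 + v + s)) := by
  have hp0 : (p : ℂ) ≠ 0 := Nat.cast_ne_zero.mpr hp.ne_zero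
  rw [moebiusGcdCpow, moebius_apply_prime hp]
  split_ifs with hpN
  · rw [Nat.gcd_eq_left hpN, show -(1 + v) = s - (1 + v + s) by ring, cpow_sub _ _ hp0]
    push_cast
    ring
  · rw [(Nat.Prime.coprime_iff_not_dvd hp).mpr hpN, cpow_neg, div_eq_mul_inv]
    push_cast
    rw [one_cpow]
    ring

theorem LSeries_hasProd (hN : N ≠ 0) {w : ℂ} (hw : 1 < w.re) :
    HasProd (fun p : Nat.Primes => 1 + moebiusGcdCpow N s p / (p : ℂ) ^ w)
      (LSeries (moebiusGcdCpow N s) w) :=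
  LSeries_hasProd_one_add_of_squarefree (map_one N s) (map_mul_of_coprime N s)
    (fun _ => eq_zero_of_not_squarefree N s)
    (LSeriesSummable_of_bounded_of_one_lt_re (fun n _ => norm_le_sum_divisors N s hN n) hw)

theorem hasProd_mul_riemannZeta_eulerFactor (hN : N ≠ 0) {v : ℂ}
    (hw : 1 < (1 + v + s).re) :
    HasProd (fun p : Nat.Primes => (1 + moebiusGcdCpow N s p / (p : ℂ) ^ (1 + v + s)) *
        (1 - (p : ℂ) ^ (-(1 + v + s)))⁻¹)
      (phiGen v N / phiGen (s + v) N) := by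
  convert Nat.Primes.hasProd_ite_dvd
    (fun p => (1 - (p : ℂ) ^ (-(1 + v))) * (1 - (p : ℂ) ^ (-(1 + v + s)))⁻¹) hN using 1
  · ext p
    rw [one_add_div_cpow_of_prime N s p.prop]
    split_ifs
    · rfl
    · exact mul_inv_cancel₀ (one_sub_prime_cpow_ne_zero p.prop hw)
  · rw [prod_mul_distrib, prod_inv_distrib, phiGen_eq_prod_one_sub v hN,
      phiGen_eq_prod_one_sub (s + v) hN, div_eq_mul_inv, show 1 + (s + v) = 1 + v + s by ring]

end moebiusGcdCpow

theorem moebius_gcd_dirichlet_series_general (s v : ℂ) (N : ℕ) (hN : 0 < N)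
    (hsv : 0 < (s + v).re) :
    ∑' m : ℕ+, (moebius m : ℂ) * ((Nat.gcd m N : ℂ) ^ s) / (m : ℂ) ^ ((1 : ℂ) + v + s)
      = phiGen v N / (riemannZeta (1 + s + v) * phiGen (s + v) N) := by
  set w : ℂ := 1 + v + s
  have hw : 1 < w.re := by simp only [w, add_re, one_re] at hsv ⊢; linarith
  have hLζ : LSeries (moebiusGcdCpow N s) w * riemannZeta w = phiGen v N / phiGen (s + v) N :=
    ((moebiusGcdCpow.LSeries_hasProd N s hN.ne' hw).mul
      (riemannZeta_eulerProduct_hasProd hw)).unique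
        (moebiusGcdCpow.hasProd_mul_riemannZeta_eulerFactor N s hN.ne' hw)
  calc _ = LSeries (moebiusGcdCpow N s) w := (LSeries_eq_tsum_pnat _ _).symm
    _ = phiGen v N / phiGen (s + v) N / riemannZeta w :=
      eq_div_of_mul_eq (riemannZeta_ne_zero_of_one_lt_re hw) hLζ
    _ = _ := by rw [div_div, mul_comm, add_right_comm]

theorem moebius_gcd_dirichlet_series (s v : ℂ) (N : ℕ) (hN : 0 < N)
    (hs : 1 < s.re) (hsv : 0 < (s + v).re) :
    ∑' m : ℕ+, (moebius m : ℂ) * ((Nat.gcd m N : ℂ) ^ s) / (m : ℂ) ^ ((1 : ℂ) + v + s)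
      = phiGen v N / (riemannZeta (1 + s + v) * phiGen (s + v) N) :=
  moebius_gcd_dirichlet_series_general s v N hN hsv
end

section
/- Let φ_s(n) = Σ_{d|n} μ(d) d^{-(1+s)} and γ(v; M; q) = Σ_{d | gcd(M,q)} d^{-v} φ_v(q/d). If gcd(M,N) = 1 and Re s > max{1, -Re v}, then Σ_{q=1}^∞ γ(v; M; qN) / q^s = (τ_{(s+v)/2}(M) / M^{(s+v)/2}) · (ζ(s)/ζ(1+s+v)) · (φ_v(N)/φ_{s+v}(N)), where τ_w(M) = Σ_{m₁m₂=M} (m₁/m₂)^w. -/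
open Finset Complex ArithmeticFunction

/-- `γ(v; M; q) = Σ_{d | gcd(M,q)} d^{-v} φ_v(q/d)`. -/
noncomputable def gammaGen (v : ℂ) (M q : ℕ) : ℂ :=
  ∑ d ∈ (Nat.gcd M q).divisors, (d : ℂ) ^ (-v) * phiGen v (q / d)

/-- `τ_w(M) = Σ_{m₁m₂=M} (m₁/m₂)^w`. -/
noncomputable def tauGen (w : ℂ) (M : ℕ) : ℂ :=
  ∑ p ∈ M.divisorsAntidiagonal, ((p.1 : ℂ) / (p.2 : ℂ)) ^ w


lemma natCast_mul_cpow (a b : ℕ) (r : ℂ) :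
    ((a * b : ℕ) : ℂ) ^ r = (a : ℂ) ^ r * (b : ℂ) ^ r := by
  have h := mul_cpow_ofReal_nonneg (a := (a : ℝ)) (b := (b : ℝ))
    (Nat.cast_nonneg a) (Nat.cast_nonneg b) r
  push_cast at h ⊢
  exact h

lemma K1 (N q : ℕ) (hN : N ≠ 0) (hq : q ≠ 0) (F : ℕ → ℂ)
    (hF : ∀ a b : ℕ, F (a * b) = F a * F b) :
    ∑ e ∈ (q * N).divisors, (moebius e : ℂ) * F e
      = (∑ a ∈ N.divisors, (moebius a : ℂ) * F a)
        * ∑ b ∈ q.divisors.filter (fun b => b.Coprime N), (moebius b : ℂ) * F b := by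
  have hqN : q * N ≠ 0 := mul_ne_zero hq hN
  rw [Finset.sum_mul_sum]
  -- restrict LHS to squarefree
  rw [← Finset.sum_filter_of_ne (p := Squarefree)
    (fun e _ h => by
      by_contra hsf
      exact h (by simp [moebius_eq_zero_of_not_squarefree hsf]))]
  -- restrict RHS to squarefree pairs
  have hR : (∑ a ∈ N.divisors, ∑ b ∈ q.divisors.filter (fun b => b.Coprime N),
       ((moebius a : ℂ) * F a) * ((moebius b : ℂ) * F b))
      = ∑ p ∈ ((N.divisors ×ˢ q.divisors.filter (fun b => b.Coprime N)).filter
          (fun p => Squarefree p.1 ∧ Squarefree p.2)),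
          ((moebius p.1 : ℂ) * F p.1) * ((moebius p.2 : ℂ) * F p.2) := by
    rw [← Finset.sum_product']
    rw [← Finset.sum_filter_of_ne (p := fun p => Squarefree p.1 ∧ Squarefree p.2)
      (fun p _ h => by
        constructor
        · by_contra hsf
          exact h (by simp [moebius_eq_zero_of_not_squarefree hsf])
        · by_contra hsf
          exact h (by simp [moebius_eq_zero_of_not_squarefree hsf]))]
  rw [hR]
  refine Finset.sum_nbij' (fun e => (Nat.gcd e N, e / Nat.gcd e N))
    (fun p => p.1 * p.2) ?_ ?_ ?_ ?_ ?_
  · rintro e he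
    simp only [Finset.mem_filter, Nat.mem_divisors] at he
    obtain ⟨⟨hdvd, -⟩, hsf⟩ := he
    have hg : Nat.gcd e N ∣ e := Nat.gcd_dvd_left e N
    have hco : Nat.Coprime (e / Nat.gcd e N) N :=
      Nat.coprime_div_gcd_of_squarefree hsf hN
    have heq : Nat.gcd e N * (e / Nat.gcd e N) = e := Nat.mul_div_cancel' hg
    have hdq : e / Nat.gcd e N ∣ q :=
      hco.dvd_of_dvd_mul_right (dvd_trans (Dvd.intro_left _ heq) hdvd)
    have hsf1 : Squarefree (Nat.gcd e N) := hsf.squarefree_of_dvd hg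
    have hsf2 : Squarefree (e / Nat.gcd e N) :=
      hsf.squarefree_of_dvd (Dvd.intro_left _ heq)
    simp only [Finset.mem_filter, Finset.mem_product, Nat.mem_divisors]
    exact ⟨⟨⟨Nat.gcd_dvd_right e N, hN⟩, ⟨hdq, hq⟩, hco⟩, hsf1, hsf2⟩
  · rintro ⟨a, b⟩ hp
    simp only [Finset.mem_filter, Finset.mem_product, Nat.mem_divisors] at hp
    obtain ⟨⟨⟨haN, -⟩, ⟨hbq, -⟩, hco⟩, hsa, hsb⟩ := hp
    have hcab : Nat.Coprime a b := (hco.coprime_dvd_right haN).symm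
    refine Finset.mem_filter.mpr ⟨Nat.mem_divisors.mpr ⟨?_, hqN⟩, ?_⟩
    · rw [mul_comm q N]; exact mul_dvd_mul haN hbq
    · exact Nat.squarefree_mul_iff.mpr ⟨hcab, hsa, hsb⟩
  · intro e he
    exact Nat.mul_div_cancel' (Nat.gcd_dvd_left e N)
  · rintro ⟨a, b⟩ hp
    simp only [Finset.mem_filter, Finset.mem_product, Nat.mem_divisors] at hp
    obtain ⟨⟨⟨haN, -⟩, ⟨hbq, -⟩, hco⟩, hsa, hsb⟩ := hp
    have ha0 : a ≠ 0 := fun h => hN (by simpa [h] using haN)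
    have h1 : Nat.gcd (a * b) N = a := by
      rw [Nat.Coprime.gcd_mul_right_cancel a hco, Nat.gcd_eq_left haN]
    simp only [h1, Prod.mk.injEq]
    exact ⟨trivial, Nat.mul_div_cancel_left b (Nat.pos_of_ne_zero ha0)⟩
  · intro e he
    simp only [Finset.mem_filter, Nat.mem_divisors] at he
    obtain ⟨⟨hdvd, -⟩, hsf⟩ := he
    have hg : Nat.gcd e N ∣ e := Nat.gcd_dvd_left e N
    have heq : Nat.gcd e N * (e / Nat.gcd e N) = e := Nat.mul_div_cancel' hg
    have hcab : Nat.Coprime (Nat.gcd e N) (e / Nat.gcd e N) := by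
      have := Nat.squarefree_mul_iff.mp (heq ▸ hsf)
      exact this.1
    have hmu : (moebius e : ℤ) = moebius (Nat.gcd e N) * moebius (e / Nat.gcd e N) := by
      conv_lhs => rw [← heq]
      exact isMultiplicative_moebius.map_mul_of_coprime hcab
    have hFe : F e = F (Nat.gcd e N) * F (e / Nat.gcd e N) := by
      conv_lhs => rw [← heq]; exact hF _ _
    rw [hmu, hFe]
    push_cast
    ring

lemma lemC (N : ℕ) (hN : N ≠ 0) (n : ℕ) (hn : n ≠ 0) :
    ∑ p ∈ n.divisorsAntidiagonal,
        (if p.1 ∣ N then (moebius p.1 : ℂ) else 0)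
          * (if p.2.Coprime N then (moebius p.2 : ℂ) else 0)
      = (moebius n : ℂ) := by
  by_cases hsf : Squarefree n
  · have hg : Nat.gcd n N ∣ n := Nat.gcd_dvd_left n N
    have heq : Nat.gcd n N * (n / Nat.gcd n N) = n := Nat.mul_div_cancel' hg
    have hg0 : Nat.gcd n N ≠ 0 := fun h => hn (by simpa [h] using heq.symm)
    have hco : Nat.Coprime (n / Nat.gcd n N) N :=
      Nat.coprime_div_gcd_of_squarefree hsf hN
    have hcab : Nat.Coprime (Nat.gcd n N) (n / Nat.gcd n N) :=
      (Nat.squarefree_mul_iff.mp (by rw [heq]; exact hsf)).1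
    rw [Finset.sum_eq_single_of_mem (Nat.gcd n N, n / Nat.gcd n N)
      (Nat.mem_divisorsAntidiagonal.mpr ⟨heq, hn⟩)]
    · rw [if_pos (Nat.gcd_dvd_right n N), if_pos hco,
        ← Int.cast_mul, ← isMultiplicative_moebius.map_mul_of_coprime hcab, heq]
    · rintro ⟨a, b⟩ hmem hne
      by_contra hterm
      have hab := (Nat.mem_divisorsAntidiagonal.mp hmem).1
      have haN : a ∣ N := by
        by_contra h; exact hterm (by simp [h])
      have hbN : b.Coprime N := by
        by_contra h; exact hterm (by simp [h])
      have ha : a = Nat.gcd n N := by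
        rw [← hab, Nat.Coprime.gcd_mul_right_cancel a hbN, Nat.gcd_eq_left haN]
      have ha0 : a ≠ 0 := fun h => hn (by simp [← hab, h])
      have hb : b = n / Nat.gcd n N := by
        rw [← ha, ← hab, Nat.mul_div_cancel_left b (Nat.pos_of_ne_zero ha0)]
      exact hne (by rw [ha, hb])
  · rw [moebius_eq_zero_of_not_squarefree hsf, Int.cast_zero]
    refine Finset.sum_eq_zero ?_
    rintro ⟨a, b⟩ hmem
    by_contra hterm
    have hab := (Nat.mem_divisorsAntidiagonal.mp hmem).1
    have haN : a ∣ N := by by_contra h; exact hterm (by simp [h])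
    have hbN : b.Coprime N := by by_contra h; exact hterm (by simp [h])
    have hsa : Squarefree a := by
      by_contra h
      exact hterm (by simp [moebius_eq_zero_of_not_squarefree h])
    have hsb : Squarefree b := by
      by_contra h
      exact hterm (by simp [moebius_eq_zero_of_not_squarefree h])
    have hcab : Nat.Coprime a b := (hbN.coprime_dvd_right haN).symm
    exact hsf (hab ▸ Nat.squarefree_mul_iff.mpr ⟨hcab, hsa, hsb⟩)

open scoped LSeries.notation

lemma tsum_pnat_eq (f : ℕ → ℂ) (hf : f 0 = 0) : ∑' q : ℕ+, f q = ∑' n : ℕ, f n := by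
  refine Function.Injective.tsum_eq (g := fun q : ℕ+ => (q : ℕ)) (fun a b h => PNat.coe_injective h) ?_
  intro n hn
  rcases Nat.eq_zero_or_pos n with rfl | hp
  · exact absurd hf hn
  · exact ⟨⟨n, hp⟩, rfl⟩

lemma lemD (s v : ℂ) (N : ℕ) (hN : N ≠ 0) (hs1 : 1 < s.re) (hsv : -v.re < s.re) :
    Summable (fun q : ℕ+ => phiGen v (q * N) / (q : ℂ) ^ s) ∧
    phiGen (s + v) N ≠ 0 ∧
    riemannZeta (1 + s + v) ≠ 0 ∧
    (∑' q : ℕ+, phiGen v (q * N) / (q : ℂ) ^ s)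
      = phiGen v N * riemannZeta s / (riemannZeta (1 + s + v) * phiGen (s + v) N) := by
  set F : ℕ → ℂ := fun n => (n : ℂ) ^ (-((1 : ℂ) + v)) with hFdef
  have hF : ∀ a b : ℕ, F (a * b) = F a * F b := fun a b => natCast_mul_cpow a b _
  set g₂ : ℕ → ℂ := fun b => if b.Coprime N then (moebius b : ℂ) * F b else 0 with hg₂def
  set g₂' : ℕ → ℂ := fun b => if b.Coprime N then (moebius b : ℂ) else 0 with hg₂'def
  set g₁ : ℕ → ℂ := fun a => if a ∣ N then (moebius a : ℂ) else 0 with hg₁def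
  have hw : 1 < (1 + s + v).re := by
    simp only [add_re, one_re]
    linarith
  -- phiGen as mu * F sums
  have hphi : ∀ m : ℕ, phiGen v m = ∑ d ∈ m.divisors, (moebius d : ℂ) * F d := by
    intro m
    unfold phiGen
    refine Finset.sum_congr rfl fun d _ => ?_
    simp only [hFdef, cpow_neg, div_eq_mul_inv]
  -- convolution formula
  have hconv_eq : ∀ q : ℕ, ((1 : ℕ → ℂ) ⍟ g₂) q = ∑ b ∈ q.divisors, g₂ b := by
    intro q
    rw [LSeries.convolution_def]
    simp only [Pi.one_apply, one_mul]
    exact Nat.sum_divisorsAntidiagonal' (f := fun _ b => g₂ b)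
  -- the splitting identity
  have hsplit : ∀ q : ℕ, q ≠ 0 → phiGen v (q * N) = phiGen v N * ((1 : ℕ → ℂ) ⍟ g₂) q := by
    intro q hq
    rw [hphi, hphi, hconv_eq, K1 N q hN hq F hF]
    congr 1
    rw [Finset.sum_filter]
  -- summability of g₂ at s
  have hg₂s : LSeriesSummable g₂ s := by
    refine LSeriesSummable_of_le_const_mul_rpow (x := -v.re) hsv ⟨1, fun n hn => ?_⟩
    rw [one_mul]
    simp only [hg₂def]
    by_cases hc : n.Coprime N
    · rw [if_pos hc, norm_mul]
      have h1 : ‖((moebius n : ℤ) : ℂ)‖ ≤ 1 := by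
        rw [Complex.norm_intCast]
        exact_mod_cast (by exact_mod_cast abs_moebius_le_one : |(moebius n : ℤ)| ≤ 1)
      have h2 : ‖(n : ℂ) ^ (-((1 : ℂ) + v))‖ = (n : ℝ) ^ (-v.re - 1) := by
        rw [Complex.norm_natCast_cpow_of_pos (Nat.pos_of_ne_zero hn)]
        congr 1
        simp only [neg_re, add_re, one_re]
        try ring
      calc ‖((moebius n : ℤ) : ℂ)‖ * ‖(n : ℂ) ^ (-((1:ℂ) + v))‖
          ≤ 1 * ((n : ℝ) ^ (-v.re - 1)) := by
            rw [h2]; exact mul_le_mul_of_nonneg_right h1 (Real.rpow_nonneg (Nat.cast_nonneg n) _)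
        _ = (n : ℝ) ^ (-v.re - 1) := one_mul _
    · rw [if_neg hc, norm_zero]
      exact Real.rpow_nonneg (Nat.cast_nonneg n) _
  have hone : LSeriesSummable (1 : ℕ → ℂ) s := LSeriesSummable_one_iff.mpr hs1
  have hconv : LSeriesSummable ((1 : ℕ → ℂ) ⍟ g₂) s := hone.convolution hg₂s
  -- summability over ℕ+
  have hterm : ∀ q : ℕ+, phiGen v (q * N) / (q : ℂ) ^ s
      = phiGen v N * LSeries.term ((1 : ℕ → ℂ) ⍟ g₂) s q := by
    intro q
    rw [LSeries.term_of_ne_zero (by exact_mod_cast q.ne_zero), hsplit q (by exact_mod_cast q.ne_zero),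
      mul_div_assoc]
  have hsummable : Summable (fun q : ℕ+ => phiGen v (q * N) / (q : ℂ) ^ s) := by
    refine Summable.congr ?_ (fun q => (hterm q).symm)
    exact (hconv.comp_injective (fun a b h => PNat.coe_injective h)).mul_left _
  refine ⟨hsummable, ?_⟩
  -- summabilities at w
  have hg₁w : LSeriesSummable g₁ (1 + s + v) := by
    refine LSeriesSummable_of_le_const_mul_rpow (x := 1) hw ⟨1, fun n hn => ?_⟩
    rw [one_mul, sub_self, Real.rpow_zero]
    simp only [hg₁def]
    by_cases hc : n ∣ N
    · rw [if_pos hc, Complex.norm_intCast]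
      exact_mod_cast (by exact_mod_cast abs_moebius_le_one : |(moebius n : ℤ)| ≤ 1)
    · rw [if_neg hc, norm_zero]
      exact zero_le_one
  have hg₂'w : LSeriesSummable g₂' (1 + s + v) := by
    refine LSeriesSummable_of_le_const_mul_rpow (x := 1) hw ⟨1, fun n hn => ?_⟩
    rw [one_mul, sub_self, Real.rpow_zero]
    simp only [hg₂'def]
    by_cases hc : n.Coprime N
    · rw [if_pos hc, Complex.norm_intCast]
      exact_mod_cast (by exact_mod_cast abs_moebius_le_one : |(moebius n : ℤ)| ≤ 1)
    · rw [if_neg hc, norm_zero]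
      exact zero_le_one
  -- convolution identity g₁ ⍟ g₂' = μ
  have hμconv : (g₁ ⍟ g₂') = ↗moebius := by
    funext n
    rcases Nat.eq_zero_or_pos n with rfl | hn
    · rw [LSeries.convolution_map_zero]
      simp
    · rw [LSeries.convolution_def]
      exact lemC N hN n hn.ne'
  -- L series identities
  have hLμ : LSeries (↗moebius) (1 + s + v) = LSeries g₁ (1 + s + v) * LSeries g₂' (1 + s + v) := by
    rw [← hμconv]
    exact LSeries_convolution' hg₁w hg₂'w
  have hζμ : LSeries (↗zeta) (1 + s + v) * LSeries (↗moebius) (1 + s + v) = 1 :=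
    LSeries_zeta_mul_Lseries_moebius hw
  have hLg₁ : LSeries g₁ (1 + s + v) = phiGen (s + v) N := by
    rw [LSeries]
    rw [tsum_eq_sum (s := N.divisors) (f := fun n => LSeries.term g₁ (1 + s + v) n) ?_]
    · unfold phiGen
      refine Finset.sum_congr rfl fun d hd => ?_
      have hd0 : d ≠ 0 := Nat.pos_of_mem_divisors hd |>.ne'
      rw [LSeries.term_of_ne_zero hd0, hg₁def]
      simp only [Nat.dvd_of_mem_divisors hd, if_pos]
      congr 1
      rw [add_assoc]
    · intro n hn
      rcases Nat.eq_zero_or_pos n with rfl | hp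
      · exact LSeries.term_zero _ _
      · show LSeries.term g₁ (1 + s + v) n = 0
        rw [LSeries.term_of_ne_zero hp.ne']
        simp only [hg₁def]
        have : ¬ n ∣ N := fun h => hn (Nat.mem_divisors.mpr ⟨h, hN⟩)
        simp [this]
  -- value of L g₂ at s
  have hLg₂ : LSeries g₂ s = LSeries g₂' (1 + s + v) := by
    unfold LSeries
    refine tsum_congr fun n => ?_
    rcases Nat.eq_zero_or_pos n with rfl | hn
    · simp [LSeries.term_zero]
    · rw [LSeries.term_of_ne_zero hn.ne', LSeries.term_of_ne_zero hn.ne']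
      have hn0 : (n : ℂ) ≠ 0 := Nat.cast_ne_zero.mpr hn.ne'
      by_cases hc : n.Coprime N
      · simp only [hg₂def, hg₂'def, if_pos hc]
        have hexp : (n : ℂ) ^ ((1 : ℂ) + s + v) = (n : ℂ) ^ ((1 : ℂ) + v) * (n : ℂ) ^ s := by
          rw [← cpow_add _ _ hn0]
          ring_nf
        simp only [hFdef]
        rw [hexp, cpow_neg]
        have hne : (n : ℂ) ^ ((1 : ℂ) + v) ≠ 0 := by
          intro h
          exact hn0 (cpow_eq_zero_iff _ _ |>.mp h).1
        field_simp
      · simp only [hg₂def, hg₂'def, if_neg hc]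
        rw [zero_div, zero_div]
  -- final computation
  have hLζw : LSeries (↗zeta) (1 + s + v) = riemannZeta (1 + s + v) :=
    LSeries_zeta_eq_riemannZeta hw
  have hζw_ne : riemannZeta (1 + s + v) ≠ 0 := riemannZeta_ne_zero_of_one_lt_re hw
  have hrel : riemannZeta (1 + s + v) * (phiGen (s + v) N * LSeries g₂' (1 + s + v)) = 1 := by
    rw [← hLζw, ← hLg₁, ← hLμ]
    exact hζμ
  have hφne : phiGen (s + v) N ≠ 0 := by
    intro h
    rw [h, zero_mul, mul_zero] at hrel
    exact zero_ne_one hrel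
  refine ⟨hφne, hζw_ne, ?_⟩
  have hHval : LSeries g₂' (1 + s + v) = (riemannZeta (1 + s + v) * phiGen (s + v) N)⁻¹ := by
    field_simp at hrel ⊢
    linear_combination hrel
  -- tsum computation
  calc ∑' q : ℕ+, phiGen v (q * N) / (q : ℂ) ^ s
      = ∑' q : ℕ+, phiGen v N * LSeries.term ((1 : ℕ → ℂ) ⍟ g₂) s q := tsum_congr hterm
    _ = phiGen v N * ∑' q : ℕ+, LSeries.term ((1 : ℕ → ℂ) ⍟ g₂) s q := tsum_mul_left
    _ = phiGen v N * LSeries ((1 : ℕ → ℂ) ⍟ g₂) s := by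
        congr 1
        exact tsum_pnat_eq _ (LSeries.term_zero _ _)
    _ = phiGen v N * (LSeries 1 s * LSeries g₂ s) := by
        rw [LSeries_convolution' hone hg₂s]
    _ = phiGen v N * riemannZeta s / (riemannZeta (1 + s + v) * phiGen (s + v) N) := by
        rw [LSeries_one_eq_riemannZeta hs1, hLg₂, hHval]
        field_simp
        try ring

lemma tauGen_div (s v : ℂ) (M : ℕ) (hM : 0 < M) :
    tauGen ((s + v) / 2) M / (M : ℂ) ^ ((s + v) / 2)
      = ∑ d ∈ M.divisors, (d : ℂ) ^ (-(s + v)) := by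
  unfold tauGen
  rw [Finset.sum_div]
  rw [show (∑ d ∈ M.divisors, (d : ℂ) ^ (-(s + v)))
      = ∑ p ∈ M.divisorsAntidiagonal, ((p.2 : ℕ) : ℂ) ^ (-(s + v)) from
    (Nat.sum_divisorsAntidiagonal' (f := fun _ b => ((b : ℕ) : ℂ) ^ (-(s + v)))).symm]
  refine Finset.sum_congr rfl fun p hp => ?_
  obtain ⟨hab, hM0⟩ := Nat.mem_divisorsAntidiagonal.mp hp
  have ha0 : p.1 ≠ 0 := fun h => hM0 (by simp [← hab, h])
  have hb0 : p.2 ≠ 0 := fun h => hM0 (by simp [← hab, h])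
  have ha0c : (p.1 : ℂ) ≠ 0 := Nat.cast_ne_zero.mpr ha0
  have hb0c : (p.2 : ℂ) ≠ 0 := Nat.cast_ne_zero.mpr hb0
  set w : ℂ := (s + v) / 2 with hw
  have hMsplit : (M : ℂ) ^ w = (p.1 : ℂ) ^ w * (p.2 : ℂ) ^ w := by
    rw [← hab]; exact natCast_mul_cpow p.1 p.2 w
  have hdiv : ((p.1 : ℂ) / (p.2 : ℂ)) ^ w = (p.1 : ℂ) ^ w * ((p.2 : ℂ) ^ w)⁻¹ := by
    have h1 : ((p.1 : ℂ) / (p.2 : ℂ)) = (((p.1 : ℝ) * (p.2 : ℝ)⁻¹ : ℝ) : ℂ) := by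
      push_cast; ring
    have harg : ((p.2 : ℝ) : ℂ).arg ≠ Real.pi := by
      rw [show ((p.2 : ℝ) : ℂ) = ((p.2 : ℕ) : ℂ) by norm_cast, Complex.natCast_arg]
      exact Real.pi_ne_zero.symm
    rw [h1, Complex.ofReal_mul,
      mul_cpow_ofReal_nonneg (Nat.cast_nonneg p.1) (inv_nonneg.mpr (Nat.cast_nonneg p.2)),
      Complex.ofReal_inv, Complex.inv_cpow _ _ harg]
    norm_cast
  have haw : (p.1 : ℂ) ^ w ≠ 0 := fun h => ha0c ((cpow_eq_zero_iff _ _).mp h).1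
  have hbw : (p.2 : ℂ) ^ w ≠ 0 := fun h => hb0c ((cpow_eq_zero_iff _ _).mp h).1
  rw [hdiv, hMsplit]
  have : ((p.2 : ℕ) : ℂ) ^ (-(s + v)) = ((p.2 : ℂ) ^ w * (p.2 : ℂ) ^ w)⁻¹ := by
    rw [← cpow_add _ _ hb0c, show w + w = s + v from by rw [hw]; ring, cpow_neg]
  rw [this]
  field_simp

theorem sum_of_gammaGen (s v : ℂ) (M N : ℕ) (hM : 0 < M) (hN : 0 < N)
    (hMN : Nat.Coprime M N) (hs : max 1 (-v.re) < s.re) :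
    ∑' q : ℕ+, gammaGen v M (q * N) / (q : ℂ) ^ s
      = tauGen ((s + v) / 2) M / (M : ℂ) ^ ((s + v) / 2)
        * (riemannZeta s / riemannZeta (1 + s + v))
        * (phiGen v N / phiGen (s + v) N) := by
  have hN0 : N ≠ 0 := hN.ne'
  have hM0 : M ≠ 0 := hM.ne'
  have hs1 : 1 < s.re := (le_max_left 1 (-v.re)).trans_lt hs
  have hsv : -v.re < s.re := (le_max_right 1 (-v.re)).trans_lt hs
  obtain ⟨hDsum, hφne, hζne, hDval⟩ := lemD s v N hN0 hs1 hsv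
  set D : ℂ := ∑' q : ℕ+, phiGen v (q * N) / (q : ℂ) ^ s with hDdef
  set f : ℕ → ℕ+ → ℂ := fun d q =>
    if d ∣ (q : ℕ) then (d : ℂ) ^ (-v) * phiGen v ((q * N : ℕ) / d) / ((q : ℕ) : ℂ) ^ s else 0
    with hfdef
  have hgam : ∀ q : ℕ+, gammaGen v M (q * N) / ((q : ℕ) : ℂ) ^ s
      = ∑ d ∈ M.divisors, f d q := by
    intro q
    unfold gammaGen
    rw [Nat.Coprime.gcd_mul_right_cancel_right (q : ℕ) hMN.symm]
    have hdiv : (Nat.gcd M (q : ℕ)).divisors = M.divisors.filter (fun d => d ∣ (q : ℕ)) := by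
      ext d
      simp only [Nat.mem_divisors, Finset.mem_filter]
      constructor
      · rintro ⟨hd, -⟩
        exact ⟨⟨hd.trans (Nat.gcd_dvd_left _ _), hM0⟩, hd.trans (Nat.gcd_dvd_right _ _)⟩
      · rintro ⟨⟨hdM, -⟩, hdq⟩
        exact ⟨Nat.dvd_gcd hdM hdq, (Nat.gcd_pos_of_pos_left _ hM).ne'⟩
    rw [hdiv, Finset.sum_filter, Finset.sum_div]
    refine Finset.sum_congr rfl fun d hd => ?_
    simp only [hfdef]
    split_ifs with h
    · rfl
    · exact zero_div _
  have hinner : ∀ d ∈ M.divisors,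
      Summable (f d) ∧ ∑' q : ℕ+, f d q = (d : ℂ) ^ (-(s + v)) * D := by
    intro d hd
    have hd0 : d ≠ 0 := (Nat.pos_of_mem_divisors hd).ne'
    have hdpos : 0 < d := Nat.pos_of_mem_divisors hd
    have hd0c : (d : ℂ) ≠ 0 := Nat.cast_ne_zero.mpr hd0
    set dp : ℕ+ := ⟨d, hdpos⟩ with hdpdef
    have hinj : Function.Injective (fun q' : ℕ+ => dp * q') := by
      intro a b h
      apply PNat.coe_injective
      have := congrArg (fun x : ℕ+ => (x : ℕ)) h
      simp only [PNat.mul_coe] at this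
      exact Nat.eq_of_mul_eq_mul_left hdpos this
    have hre : ∀ q' : ℕ+, f d (dp * q')
        = (d : ℂ) ^ (-(s + v)) * (phiGen v (q' * N) / ((q' : ℕ) : ℂ) ^ s) := by
      intro q'
      have hcoe : ((dp * q' : ℕ+) : ℕ) = d * (q' : ℕ) := rfl
      simp only [hfdef, hcoe]
      rw [if_pos (dvd_mul_right d (q' : ℕ))]
      have h1 : (d * (q' : ℕ)) * N / d = (q' : ℕ) * N := by
        rw [mul_assoc, Nat.mul_div_cancel_left _ hdpos]
      have h2 : ((d * (q' : ℕ) : ℕ) : ℂ) ^ s = (d : ℂ) ^ s * ((q' : ℕ) : ℂ) ^ s :=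
        natCast_mul_cpow d (q' : ℕ) s
      rw [h1, h2]
      have hds : (d : ℂ) ^ (-(s + v)) = ((d : ℂ) ^ s)⁻¹ * (d : ℂ) ^ (-v) := by
        rw [show -(s + v) = -s + -v from by ring, cpow_add _ _ hd0c, cpow_neg]
      rw [hds]
      ring
    have hsupp : ∀ q ∉ Set.range (fun q' : ℕ+ => dp * q'), f d q = 0 := by
      intro q hq
      by_cases hdq : d ∣ (q : ℕ)
      · exfalso
        apply hq
        have hqd : 0 < (q : ℕ) / d := Nat.div_pos (Nat.le_of_dvd q.pos hdq) hdpos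
        refine ⟨⟨(q : ℕ) / d, hqd⟩, ?_⟩
        apply PNat.coe_injective
        simp only [PNat.mul_coe]
        exact Nat.mul_div_cancel' hdq
      · simp only [hfdef]
        rw [if_neg hdq]
    constructor
    · refine (Function.Injective.summable_iff hinj hsupp).mp ?_
      exact ((hDsum.mul_left ((d : ℂ) ^ (-(s + v)))).congr (fun q' => (hre q').symm))
    · rw [← Function.Injective.tsum_eq hinj
        (fun x hx => by by_contra h; exact hx (hsupp x h))]
      rw [tsum_congr hre, tsum_mul_left]
  calc ∑' q : ℕ+, gammaGen v M (q * N) / ((q : ℕ) : ℂ) ^ s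
      = ∑' q : ℕ+, ∑ d ∈ M.divisors, f d q := tsum_congr hgam
    _ = ∑ d ∈ M.divisors, ∑' q : ℕ+, f d q := Summable.tsum_finsetSum (fun d hd => (hinner d hd).1)
    _ = ∑ d ∈ M.divisors, (d : ℂ) ^ (-(s + v)) * D :=
        Finset.sum_congr rfl (fun d hd => (hinner d hd).2)
    _ = (∑ d ∈ M.divisors, (d : ℂ) ^ (-(s + v))) * D := by rw [← Finset.sum_mul]
    _ = tauGen ((s + v) / 2) M / (M : ℂ) ^ ((s + v) / 2)
        * (riemannZeta s / riemannZeta (1 + s + v))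
        * (phiGen v N / phiGen (s + v) N) := by
        rw [← tauGen_div s v M hM, hDval]
        field_simp
end

section
/- Fix real t > 0 and y > 0, and let a > 2. Suppose F : (1,∞) → ℝ is given by F(z) = e^{−tρ(z)} / (t^{1/2} z (z²−1)^{1/4}) with ρ(z) = √(z²−1) − arccos(1/z). Then ∫_a^∞ F(z) dz ≪ e^{−tρ(a)} / (a t)^{3/2}, with an absolute implied constant. -/
/-!
Since `ρ'(z) = √(z²−1)/z`, the function `e^{−tρ} ρ'` has the primitive `−e^{−tρ}/t`, and `ρ → ∞`,
so its integral over `(a, ∞)` is exactly `e^{−tρ(a)}/t`. The integrand is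
`t^{−1/2} e^{−tρ(z)} ρ'(z) (z²−1)^{−3/4}`, and for `z ≥ a ≥ 2` we have `a² ≤ 2(z²−1)`, hence
`(z²−1)^{−3/4} ≤ 2 a^{−3/2}`; this gives the bound with `C = 2`.
-/

open Real Set MeasureTheory

open Filter Topology

/-- `ρ(z) = √(z²−1) − arccos(1/z)`. -/
noncomputable def rhoFun (z : ℝ) : ℝ := Real.sqrt (z ^ 2 - 1) - Real.arccos (1 / z)

lemma hasDerivAt_rhoFun {z : ℝ} (hz : 1 < z) :
    HasDerivAt rhoFun (√(z ^ 2 - 1) / z) z := by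
  have hz0 : 0 < z := by linarith
  have hs : 0 < z ^ 2 - 1 := by nlinarith
  have hsqrt : HasDerivAt (fun z : ℝ => √(z ^ 2 - 1)) (1 / (2 * √(z ^ 2 - 1)) * (2 * z)) z :=
    (hasDerivAt_sqrt hs.ne').comp z (by simpa using (hasDerivAt_pow 2 z).sub_const 1)
  have hinv : HasDerivAt (fun z : ℝ => 1 / z) (-(z ^ 2)⁻¹) z := by
    simpa only [one_div] using hasDerivAt_inv hz0.ne'
  have harccos : HasDerivAt (fun z : ℝ => arccos (1 / z))
      (-(1 / √(1 - (1 / z) ^ 2)) * -(z ^ 2)⁻¹) z :=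
    (hasDerivAt_arccos (by linarith [one_div_pos.2 hz0]) ((div_lt_one hz0).2 hz).ne).comp z hinv
  refine (hsqrt.sub harccos).congr_deriv ?_
  have hsqrt_inv : √(1 - (1 / z) ^ 2) = √(z ^ 2 - 1) / z := by
    rw [show 1 - (1 / z) ^ 2 = (z ^ 2 - 1) / z ^ 2 by field_simp, sqrt_div hs.le,
      sqrt_sq hz0.le]
  rw [hsqrt_inv]
  field_simp
  linear_combination -sq_sqrt hs.le

lemma tendsto_rhoFun_atTop : Tendsto rhoFun atTop atTop := by
  refine tendsto_atTop_mono' atTop ?_ (tendsto_atTop_add_const_right atTop (-(1 + π)) tendsto_id)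
  filter_upwards [eventually_ge_atTop 1] with z hz
  have hsqrt : z - 1 ≤ √(z ^ 2 - 1) := le_sqrt_of_sq_le (by nlinarith)
  have harccos : arccos (1 / z) ≤ π := arccos_le_pi _
  simp only [rhoFun, id]
  linarith

section ExactIntegral

variable {t a : ℝ}

lemma hasDerivAt_neg_exp_neg_mul_rhoFun_div (ht : t ≠ 0) {z : ℝ} (hz : 1 < z) :
    HasDerivAt (fun z => -exp (-t * rhoFun z) / t)
      (exp (-t * rhoFun z) * (√(z ^ 2 - 1) / z)) z := by
  refine (((hasDerivAt_rhoFun hz).const_mul (-t)).exp.neg.div_const t).congr_deriv ?_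
  field_simp

lemma tendsto_neg_exp_neg_mul_rhoFun_div (ht : 0 < t) :
    Tendsto (fun z => -exp (-t * rhoFun z) / t) atTop (𝓝 0) := by
  have hexp : Tendsto (fun z => exp (-t * rhoFun z)) atTop (𝓝 0) :=
    tendsto_exp_atBot.comp (tendsto_rhoFun_atTop.const_mul_atTop_of_neg (neg_neg_of_pos ht))
  simpa using hexp.neg.div_const t

lemma integrableOn_exp_neg_mul_rhoFun_mul_deriv (ht : 0 < t) (ha : 1 < a) :
    IntegrableOn (fun z => exp (-t * rhoFun z) * (√(z ^ 2 - 1) / z)) (Ioi a) :=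
  integrableOn_Ioi_deriv_of_nonneg'
    (fun _ hz => hasDerivAt_neg_exp_neg_mul_rhoFun_div ht.ne' (ha.trans_le hz))
    (fun _ hz => mul_nonneg (exp_pos _).le
      (div_nonneg (sqrt_nonneg _) (zero_lt_one.trans (ha.trans hz)).le))
    (tendsto_neg_exp_neg_mul_rhoFun_div ht)

lemma integral_exp_neg_mul_rhoFun_mul_deriv (ht : 0 < t) (ha : 1 < a) :
    ∫ z in Ioi a, exp (-t * rhoFun z) * (√(z ^ 2 - 1) / z) = exp (-t * rhoFun a) / t := by
  rw [integral_Ioi_of_hasDerivAt_of_tendsto'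
    (fun _ hz => hasDerivAt_neg_exp_neg_mul_rhoFun_div ht.ne' (ha.trans_le hz))
    (integrableOn_exp_neg_mul_rhoFun_mul_deriv ht ha) (tendsto_neg_exp_neg_mul_rhoFun_div ht)]
  ring

end ExactIntegral

lemma rpow_three_halves_le_two_mul_rpow {a x : ℝ} (ha : 0 ≤ a) (hax : a ^ 2 ≤ 2 * x) :
    a ^ (3 / 2 : ℝ) ≤ 2 * x ^ (3 / 4 : ℝ) := by
  have hx : 0 ≤ x := by nlinarith
  calc a ^ (3 / 2 : ℝ) = (a ^ 2) ^ (3 / 4 : ℝ) := by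
        rw [← rpow_natCast, ← rpow_mul ha]; norm_num
    _ ≤ (2 * x) ^ (3 / 4 : ℝ) := by gcongr
    _ = 2 ^ (3 / 4 : ℝ) * x ^ (3 / 4 : ℝ) := mul_rpow zero_le_two hx
    _ ≤ 2 * x ^ (3 / 4 : ℝ) := by
        gcongr
        simpa using rpow_le_rpow_of_exponent_le one_le_two (by norm_num : (3 / 4 : ℝ) ≤ 1)

lemma exp_neg_mul_rhoFun_div_le {t a z : ℝ} (ht : 0 < t) (ha : 2 ≤ a) (hz : a ≤ z) :
    exp (-t * rhoFun z) / (t ^ (1 / 2 : ℝ) * z * (z ^ 2 - 1) ^ (1 / 4 : ℝ)) ≤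
      2 / (a ^ (3 / 2 : ℝ) * t ^ (1 / 2 : ℝ)) * (exp (-t * rhoFun z) * (√(z ^ 2 - 1) / z)) := by
  have hz0 : 0 < z := by linarith
  have hs : 0 < z ^ 2 - 1 := by nlinarith
  have hkey : a ^ (3 / 2 : ℝ) ≤ (z ^ 2 - 1) ^ (1 / 4 : ℝ) * (2 * (z ^ 2 - 1) ^ (1 / 2 : ℝ)) := by
    calc a ^ (3 / 2 : ℝ) ≤ 2 * (z ^ 2 - 1) ^ (3 / 4 : ℝ) :=
          rpow_three_halves_le_two_mul_rpow (by linarith) (by nlinarith)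
      _ = _ := by rw [mul_left_comm, ← rpow_add hs]; norm_num
  calc exp (-t * rhoFun z) / (t ^ (1 / 2 : ℝ) * z * (z ^ 2 - 1) ^ (1 / 4 : ℝ))
      = exp (-t * rhoFun z) / (t ^ (1 / 2 : ℝ) * z) * ((z ^ 2 - 1) ^ (1 / 4 : ℝ))⁻¹ := by
        field_simp
    _ ≤ exp (-t * rhoFun z) / (t ^ (1 / 2 : ℝ) * z) *
          (2 * (z ^ 2 - 1) ^ (1 / 2 : ℝ) / a ^ (3 / 2 : ℝ)) := by
        gcongr
        rw [le_div_iff₀ (by positivity), inv_mul_le_iff₀ (by positivity)]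
        exact hkey
    _ = _ := by
        rw [sqrt_eq_rpow]
        field_simp

theorem bessel_tail_integral_bound :
    ∃ C : ℝ, 0 < C ∧ ∀ t : ℝ, 0 < t → ∀ a : ℝ, 2 < a →
      ∫ z in Ioi a,
          Real.exp (-t * rhoFun z) / (t ^ ((1 : ℝ) / 2) * z * (z ^ 2 - 1) ^ ((1 : ℝ) / 4))
        ≤ C * Real.exp (-t * rhoFun a) / (a * t) ^ ((3 : ℝ) / 2) := by
  refine ⟨2, two_pos, fun t ht a ha => ?_⟩
  have ha1 : 1 < a := by linarith
  calc _ ≤ ∫ z in Ioi a, 2 / (a ^ (3 / 2 : ℝ) * t ^ (1 / 2 : ℝ)) *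
          (exp (-t * rhoFun z) * (√(z ^ 2 - 1) / z)) := by
        refine setIntegral_mono_of_nonneg (fun z hz => ?_) (fun z hz => ?_)
          ((integrableOn_exp_neg_mul_rhoFun_mul_deriv ht ha1).const_mul _)
        · have hz0 : 0 < z := by linarith [hz.out]
          have hs : 0 < z ^ 2 - 1 := by nlinarith [hz.out]
          positivity
        · exact exp_neg_mul_rhoFun_div_le ht ha.le hz.out.le
    _ = 2 / (a ^ (3 / 2 : ℝ) * t ^ (1 / 2 : ℝ)) * (exp (-t * rhoFun a) / t) := by
        rw [integral_const_mul, integral_exp_neg_mul_rhoFun_mul_deriv ht ha1]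
    _ = _ := by
        rw [mul_rpow (by linarith) ht.le, show (3 / 2 : ℝ) = 1 / 2 + 1 by norm_num,
          rpow_add ht, rpow_one]
        field_simp
end
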